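/- For n ≥ 1 and triples (p,q,r), (p',q',r') ∈ ℕ³ with p+q+r ≤ n and p'+q'+r' ≤ n, the commutator B_{p,q,r}·B_{p',q',r'} − B_{p',q',r'}·B_{p,q,r} lies in the ℂ-linear span of the family {B_{p̃,q̃,r̃} : p̃,q̃,r̃ ∈ ℕ, p̃+q̃+r̃ ≤ n}. Moreover, all coefficients in this expansion are purely imaginary; equivalently, i·(B_{p,q,r}·B_{p',q',r'} − B_{p',q',r'}·B_{p,q,r}) lies in the ℝ-linear span of that family. (The commutator of two Pauli orbits closes in the Pauli orbit basis.) -/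

import Mathlib

open Matrix

open Finset

/-- The four Pauli letters `I, X, Y, Z`. -/
inductive PauliLetter : Type
  | I | X | Y | Z
  deriving DecidableEq

instance : Fintype PauliLetter :=
  ⟨{PauliLetter.I, PauliLetter.X, PauliLetter.Y, PauliLetter.Z}, fun x => by cases x <;> simp⟩

/-- The 2×2 complex matrix associated to a Pauli letter. -/
def PauliLetter.toMatrix : PauliLetter → Matrix (Fin 2) (Fin 2) ℂ
  | .I => !![1, 0; 0, 1]
  | .X => !![0, 1; 1, 0]
  | .Y => !![0, -Complex.I; Complex.I, 0]
  | .Z => !![1, 0; 0, -1]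

/-- The Pauli string associated to a Pauli letter assignment `f : Fin n → PauliLetter`,
given entrywise as the `n`-fold Kronecker product of the single-site matrices. -/
def pauliString {n : ℕ} (f : Fin n → PauliLetter) :
    Matrix (Fin n → Fin 2) (Fin n → Fin 2) ℂ :=
  Matrix.of fun x y => ∏ t, (f t).toMatrix (x t) (y t)

/-- The orbit set `Ω_{p,q,r}`: Pauli letter assignments with exactly `p` letters `X`,
`q` letters `Y`, and `r` letters `Z`. -/
def orbitSet (n p q r : ℕ) : Finset (Fin n → PauliLetter) :=
  univ.filter fun f =>
    (univ.filter fun t => f t = PauliLetter.X).card = p ∧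
    (univ.filter fun t => f t = PauliLetter.Y).card = q ∧
    (univ.filter fun t => f t = PauliLetter.Z).card = r

/-- The Pauli orbit operator `B_{p,q,r} = Σ_{f ∈ Ω_{p,q,r}} M_f`. -/
noncomputable def pauliOrbit (n p q r : ℕ) :
    Matrix (Fin n → Fin 2) (Fin n → Fin 2) ℂ :=
  ∑ f ∈ orbitSet n p q r, pauliString f

/-!
Letterwise, `M_f * M_g = φ(f, g) • M_{f * g}` where `f * g` is the Klein-four product of letters
and `φ(f, g)` is a product of phases in `{1, ±i}`; the reversed product has the conjugate phase.
Hence `i • [B, B'] = ∑ h, c h • M_h` with real `c h = -2 ∑_{f * g = h} im φ(f, g)`, the sum running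
over `(f, g) ∈ Ω × Ω'`. Permuting sites preserves the letter product, the phase and the orbit
sets, so `c` is invariant under site permutations. The orbit sets `Ω_{p,q,r}` are precisely the
orbits of that action, so `c` is constant on each of them and the sum regroups into a real
combination of the `B_{p,q,r}`.
-/

namespace PauliLetter

def mul : PauliLetter → PauliLetter → PauliLetter
  | I, a | a, I => a
  | X, X | Y, Y | Z, Z => I
  | X, Y | Y, X => Z
  | Y, Z | Z, Y => X
  | Z, X | X, Z => Y

instance : CommMagma PauliLetter where
  mul := mul
  mul_comm a b := by cases a <;> cases b <;> rfl

def phase : PauliLetter → PauliLetter → ℂ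
  | X, Y | Y, Z | Z, X => Complex.I
  | Y, X | Z, Y | X, Z => -Complex.I
  | _, _ => 1

lemma phase_swap (a b : PauliLetter) : phase b a = starRingEnd ℂ (phase a b) := by
  cases a <;> cases b <;> simp [phase]

lemma toMatrix_mul_toMatrix (a b : PauliLetter) :
    a.toMatrix * b.toMatrix = phase a b • (a * b).toMatrix := by
  change _ = _ • (mul a b).toMatrix
  cases a <;> cases b <;>
    · ext i j
      fin_cases i <;> fin_cases j <;> simp [toMatrix, phase, mul, Matrix.mul_apply]

end PauliLetter

open PauliLetter

section PauliString

variable {n : ℕ}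

def stringPhase (f g : Fin n → PauliLetter) : ℂ := ∏ t, phase (f t) (g t)

lemma stringPhase_swap (f g : Fin n → PauliLetter) :
    stringPhase g f = starRingEnd ℂ (stringPhase f g) := by
  rw [stringPhase, stringPhase, map_prod]
  exact Finset.prod_congr rfl fun t _ => phase_swap (f t) (g t)

lemma stringPhase_comp (f g : Fin n → PauliLetter) (σ : Equiv.Perm (Fin n)) :
    stringPhase (f ∘ σ) (g ∘ σ) = stringPhase f g :=
  Equiv.prod_comp σ fun t => phase (f t) (g t)

lemma pauliString_mul (f g : Fin n → PauliLetter) :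
    pauliString f * pauliString g = stringPhase f g • pauliString (f * g) := by
  ext x y
  have hsite (t : Fin n) : ∑ k, (f t).toMatrix (x t) k * (g t).toMatrix k (y t) =
      phase (f t) (g t) * (f t * g t).toMatrix (x t) (y t) := by
    simpa [Matrix.mul_apply] using congr($(toMatrix_mul_toMatrix (f t) (g t)) (x t) (y t))
  calc (pauliString f * pauliString g) x y
      = ∑ z : Fin n → Fin 2, ∏ t, (f t).toMatrix (x t) (z t) * (g t).toMatrix (z t) (y t) := by
        simp only [Matrix.mul_apply, pauliString, Matrix.of_apply, Finset.prod_mul_distrib]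
    _ = ∏ t, ∑ k, (f t).toMatrix (x t) k * (g t).toMatrix k (y t) :=
        (Fintype.prod_sum fun t k => (f t).toMatrix (x t) k * (g t).toMatrix k (y t)).symm
    _ = (stringPhase f g • pauliString (f * g)) x y := by
        simp only [hsite, Finset.prod_mul_distrib, stringPhase, pauliString, Matrix.smul_apply,
          Matrix.of_apply, smul_eq_mul, Pi.mul_apply]

/-- The reversed product carries the conjugate phase, so the commutator has coefficient
`φ - conj φ = 2 * im φ * i`. -/
lemma I_smul_pauliString_commutator (f g : Fin n → PauliLetter) :
    Complex.I • (pauliString f * pauliString g - pauliString g * pauliString f) =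
      (-2 * (stringPhase f g).im) • pauliString (f * g) := by
  rw [pauliString_mul, pauliString_mul, mul_comm g f, stringPhase_swap f g, ← sub_smul, smul_smul,
    Complex.sub_conj, ← Complex.coe_smul]
  congr 1
  push_cast
  linear_combination (2 * (stringPhase f g).im : ℂ) * Complex.I_mul_I

end PauliString

lemma Function.exists_perm_comp_eq_of_card_fiber {α β : Type*} [Fintype α] [DecidableEq β]
    {f g : α → β} (hfg : ∀ b, #{a | f a = b} = #{a | g a = b}) :
    ∃ σ : Equiv.Perm α, g ∘ σ = f := by
  refine ⟨Equiv.ofFiberEquiv (f := f) (g := g) fun b => Fintype.equivOfCardEq ?_, ?_⟩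
  · simpa only [Fintype.card_subtype] using hfg b
  · funext a
    exact Equiv.ofFiberEquiv_map _ a

section Orbits

variable {n : ℕ}

def letterCount (f : Fin n → PauliLetter) (L : PauliLetter) : ℕ := #{t | f t = L}

lemma mem_orbitSet {p q r : ℕ} {f : Fin n → PauliLetter} :
    f ∈ orbitSet n p q r ↔ letterCount f X = p ∧ letterCount f Y = q ∧ letterCount f Z = r := by
  simp [orbitSet, letterCount]

lemma sum_letterCount (f : Fin n → PauliLetter) :
    letterCount f I + letterCount f X + letterCount f Y + letterCount f Z = n := by
  have h := Finset.card_eq_sum_card_fiberwise (f := f) (s := univ) (t := univ)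
    fun _ _ => mem_univ _
  rw [card_univ, Fintype.card_fin] at h
  have expand : ∑ L, #{t | f t = L} =
      letterCount f I + (letterCount f X + (letterCount f Y + (letterCount f Z + 0))) := rfl
  omega

lemma letterCount_comp_perm (f : Fin n → PauliLetter) (σ : Equiv.Perm (Fin n)) (L : PauliLetter) :
    letterCount (f ∘ σ) L = letterCount f L :=
  Finset.card_equiv σ (by simp)

lemma comp_perm_mem_orbitSet_iff {p q r : ℕ} {f : Fin n → PauliLetter} (σ : Equiv.Perm (Fin n)) :
    f ∘ σ ∈ orbitSet n p q r ↔ f ∈ orbitSet n p q r := by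
  simp only [mem_orbitSet, letterCount_comp_perm]

lemma exists_perm_of_mem_orbitSet {p q r : ℕ} {f g : Fin n → PauliLetter}
    (hf : f ∈ orbitSet n p q r) (hg : g ∈ orbitSet n p q r) :
    ∃ σ : Equiv.Perm (Fin n), g ∘ σ = f := by
  apply Function.exists_perm_comp_eq_of_card_fiber
  rw [mem_orbitSet] at hf hg
  have hsf := sum_letterCount f
  have hsg := sum_letterCount g
  intro L
  change letterCount f L = letterCount g L
  cases L <;> omega

def orbitFamily (n : ℕ) : Set (Matrix (Fin n → Fin 2) (Fin n → Fin 2) ℂ) :=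
  {B | ∃ pt qt rt : ℕ, pt + qt + rt ≤ n ∧ B = pauliOrbit n pt qt rt}

lemma sum_orbitSet_smul_pauliString {p q r : ℕ} {c : (Fin n → PauliLetter) → ℝ}
    (hc : ∀ h (σ : Equiv.Perm (Fin n)), c (h ∘ σ) = c h) {h₀ : Fin n → PauliLetter}
    (h₀_mem : h₀ ∈ orbitSet n p q r) :
    ∑ h ∈ orbitSet n p q r, c h • pauliString h = c h₀ • pauliOrbit n p q r := by
  rw [pauliOrbit, Finset.smul_sum]
  refine Finset.sum_congr rfl fun h h_mem => ?_
  obtain ⟨σ, rfl⟩ := exists_perm_of_mem_orbitSet h_mem h₀_mem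
  rw [hc]

lemma sum_smul_pauliString_mem_span {c : (Fin n → PauliLetter) → ℝ}
    (hc : ∀ h (σ : Equiv.Perm (Fin n)), c (h ∘ σ) = c h) :
    ∑ h, c h • pauliString h ∈ Submodule.span ℝ (orbitFamily n) := by
  set counts : (Fin n → PauliLetter) → ℕ × ℕ × ℕ :=
    fun h => (letterCount h X, letterCount h Y, letterCount h Z)
  rw [← Finset.sum_fiberwise_of_maps_to (t := univ.image counts)
    fun h _ => mem_image_of_mem counts (mem_univ h)]
  refine Submodule.sum_mem _ fun T hT => ?_
  obtain ⟨h₀, -, rfl⟩ := mem_image.mp hT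
  have fiber_eq : {h ∈ (univ : Finset (Fin n → PauliLetter)) | counts h = counts h₀} =
      orbitSet n (letterCount h₀ X) (letterCount h₀ Y) (letterCount h₀ Z) := by
    ext h
    simp [counts, mem_orbitSet]
  rw [fiber_eq, sum_orbitSet_smul_pauliString hc (mem_orbitSet.mpr ⟨rfl, rfl, rfl⟩)]
  refine Submodule.smul_mem _ _ (Submodule.subset_span ⟨_, _, _, ?_, rfl⟩)
  linarith [sum_letterCount h₀]

end Orbits

section Commutator

variable {n : ℕ} (p q r p' q' r' : ℕ)

noncomputable def commutatorCoeff (h : Fin n → PauliLetter) : ℝ :=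
  ∑ fg ∈ orbitSet n p q r ×ˢ orbitSet n p' q' r' with fg.1 * fg.2 = h,
    -2 * (stringPhase fg.1 fg.2).im

lemma I_smul_commutator_pauliOrbit :
    Complex.I • (pauliOrbit n p q r * pauliOrbit n p' q' r' -
        pauliOrbit n p' q' r' * pauliOrbit n p q r) =
      ∑ h, commutatorCoeff p q r p' q' r' h • pauliString h := by
  calc Complex.I • (pauliOrbit n p q r * pauliOrbit n p' q' r' -
        pauliOrbit n p' q' r' * pauliOrbit n p q r)
      = ∑ fg ∈ orbitSet n p q r ×ˢ orbitSet n p' q' r', Complex.I •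
          (pauliString fg.1 * pauliString fg.2 - pauliString fg.2 * pauliString fg.1) := by
        rw [pauliOrbit, pauliOrbit, sum_mul_sum, sum_mul_sum, sum_comm (s := orbitSet n p' q' r'),
          ← sum_sub_distrib, sum_product]
        simp only [smul_sum, ← sum_sub_distrib]
    _ = ∑ fg ∈ orbitSet n p q r ×ˢ orbitSet n p' q' r',
          (-2 * (stringPhase fg.1 fg.2).im) • pauliString (fg.1 * fg.2) := by
        simp only [I_smul_pauliString_commutator]
    _ = ∑ h, commutatorCoeff p q r p' q' r' h • pauliString h := by
        rw [← sum_fiberwise _ fun fg => fg.1 * fg.2]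
        refine sum_congr rfl fun h _ => ?_
        rw [commutatorCoeff, sum_smul]
        exact sum_congr rfl fun fg hfg => by rw [(mem_filter.mp hfg).2]

lemma commutatorCoeff_comp_perm (h : Fin n → PauliLetter) (σ : Equiv.Perm (Fin n)) :
    commutatorCoeff p q r p' q' r' (h ∘ σ) = commutatorCoeff p q r p' q' r' h := by
  let precomp : (Fin n → PauliLetter) ≃ (Fin n → PauliLetter) := σ.symm.arrowCongr (.refl _)
  have precomp_apply (f : Fin n → PauliLetter) : precomp f = f ∘ σ := rfl
  symm
  refine sum_equiv (precomp.prodCongr precomp) (fun fg => ?_) fun fg _ => ?_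
  · have : (fg.1 * fg.2) ∘ σ = h ∘ σ ↔ fg.1 * fg.2 = h :=
      σ.surjective.injective_comp_right.eq_iff
    simp only [mem_filter, mem_product, Equiv.prodCongr_apply, Prod.map, precomp_apply,
      comp_perm_mem_orbitSet_iff]
    exact and_congr_right fun _ => this.symm
  · simp [precomp_apply, stringPhase_comp]

end Commutator

theorem pauliOrbit_commutator_closes_general (n : ℕ) (p q r p' q' r' : ℕ) :
    (pauliOrbit n p q r * pauliOrbit n p' q' r' -
        pauliOrbit n p' q' r' * pauliOrbit n p q r) ∈
      Submodule.span ℂ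
        {B | ∃ pt qt rt : ℕ, pt + qt + rt ≤ n ∧ B = pauliOrbit n pt qt rt} ∧
    Complex.I • (pauliOrbit n p q r * pauliOrbit n p' q' r' -
        pauliOrbit n p' q' r' * pauliOrbit n p q r) ∈
      Submodule.span ℝ
        {B | ∃ pt qt rt : ℕ, pt + qt + rt ≤ n ∧ B = pauliOrbit n pt qt rt} := by
  have real_mem : Complex.I • (pauliOrbit n p q r * pauliOrbit n p' q' r' -
      pauliOrbit n p' q' r' * pauliOrbit n p q r) ∈ Submodule.span ℝ (orbitFamily n) := by
    rw [I_smul_commutator_pauliOrbit]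
    exact sum_smul_pauliString_mem_span (commutatorCoeff_comp_perm p q r p' q' r')
  refine ⟨?_, real_mem⟩
  have complex_mem := Submodule.span_le_restrictScalars ℝ ℂ _ real_mem
  have := Submodule.smul_mem _ (-Complex.I) complex_mem
  rwa [smul_smul, neg_mul, Complex.I_mul_I, neg_neg, one_smul] at this

/-- The commutator of two Pauli orbits closes in the Pauli orbit basis: it lies in the ℂ-span
of the orbit family, and `i` times it lies in the ℝ-span (the coefficients are purely
imaginary). -/
theorem pauliOrbit_commutator_closes (n : ℕ) (hn : 1 ≤ n) (p q r p' q' r' : ℕ)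
    (h : p + q + r ≤ n) (h' : p' + q' + r' ≤ n) :
    (pauliOrbit n p q r * pauliOrbit n p' q' r' -
        pauliOrbit n p' q' r' * pauliOrbit n p q r) ∈
      Submodule.span ℂ
        {B | ∃ pt qt rt : ℕ, pt + qt + rt ≤ n ∧ B = pauliOrbit n pt qt rt} ∧
    Complex.I • (pauliOrbit n p q r * pauliOrbit n p' q' r' -
        pauliOrbit n p' q' r' * pauliOrbit n p q r) ∈
      Submodule.span ℝ
        {B | ∃ pt qt rt : ℕ, pt + qt + rt ≤ n ∧ B = pauliOrbit n pt qt rt} :=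
  pauliOrbit_commutator_closes_general n p q r p' q' r'
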